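/- arXiv:2410.03849 — 2 statements merged into one kernel-verified Lean document; each statement's English description precedes it below -/
import Mathlib

section
/- Suppose the class F satisfies: for every x_{1:T} ∈ X^T and y_{1:T} ∈ Y^T, inf_{f ∈ F} Σ_{t=1}^T ℓ(f(x_{1:t}, y_{1:t-1}), y_t) < ∞. Then the minimax regret equals the dual value: R_T(F) = V_T(F). -/
open scoped BigOperators

/-- The probability simplex on a finite label set `Y`. -/
abbrev Simplex (Y : Type*) [Fintype Y] :=
  {p : Y → ℝ // (∀ y, 0 ≤ p y) ∧ ∑ y, p y = 1}

/-- A sequential expert: given contexts `x₁,…,x_t` (a list of length `t`) and past labels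
`y₁,…,y_{t-1}` (a list of length `t-1`), it predicts a distribution over labels. -/
abbrev Expert (X Y : Type*) [Fintype Y] := List X → List Y → Simplex Y

/-- `-log x` as an extended real, with `-log 0 = ⊤` (and junk value `⊤` for `x < 0`). -/
noncomputable def negLog (x : ℝ) : EReal :=
  if x ≤ 0 then ⊤ else ((-Real.log x : ℝ) : EReal)

/-- `log x` as an extended real, with `log 0 = ⊥` (and junk value `⊥` for `x < 0`). -/
noncomputable def elog (x : ℝ) : EReal :=
  if x ≤ 0 then ⊥ else ((Real.log x : ℝ) : EReal)

/-- The logarithmic loss `ℓ(p, y) = -log p(y) ∈ [0, ∞]`. -/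
noncomputable def logloss {Y : Type*} [Fintype Y] (p : Simplex Y) (y : Y) : EReal :=
  negLog (p.1 y)

/-- Likelihood of expert `f` on a context sequence `xs` and a label sequence `ys`
of the same length: `L(f; y_{1:d} | x_{1:d}) = ∏_{t=1}^d f(x_{1:t}, y_{1:t-1})(y_t)`. -/
noncomputable def likelihood {X Y : Type*} [Fintype Y] [Inhabited Y]
    (f : Expert X Y) (xs : List X) (ys : List Y) : ℝ :=
  ∏ t ∈ Finset.range ys.length, (f (xs.take (t + 1)) (ys.take t)).1 (ys.getD t default)

/-- Cumulative log loss of expert `f` on `xs`, `ys`: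
`Σ_{t=1}^d ℓ(f(x_{1:t}, y_{1:t-1}), y_t)`. -/
noncomputable def cumLoss {X Y : Type*} [Fintype Y] [Inhabited Y]
    (f : Expert X Y) (xs : List X) (ys : List Y) : EReal :=
  ∑ t ∈ Finset.range ys.length, logloss (f (xs.take (t + 1)) (ys.take t)) (ys.getD t default)

/-- A context tree of depth `T` is modelled as a map `χ : List Y → X` (only its values on
lists of length `< T` matter): `x_t(y) = χ (y_{1:t-1})`.  `treePath χ ys` is the context
sequence `x(y) = (x_1, x_2(y_1), …)` obtained by tracing the tree along the path `ys`. -/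
def treePath {X Y : Type*} (χ : List Y → X) (ys : List Y) : List X :=
  (List.range ys.length).map fun t => χ (ys.take t)

/-- The contextual Shtarkov sum of `F` on a context tree `χ` of depth `r`, with prefix
`xs ∈ X^t`, `ys ∈ Y^t`:
`S_T(F, χ | x_{1:t}, y_{1:t}) = Σ_{y ∈ Y^r} sup_{f ∈ F} L(f; (y_{1:t}, y) | (x_{1:t}, χ(y)))`. -/
noncomputable def shtarkovPrefix {X Y : Type*} [Fintype Y] [Inhabited Y]
    (F : Set (Expert X Y)) (r : ℕ) (χ : List Y → X) (xs : List X) (ys : List Y) : ℝ :=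
  ∑ y : Fin r → Y, ⨆ f : F,
    likelihood (f : Expert X Y) (xs ++ treePath χ (List.ofFn y)) (ys ++ List.ofFn y)

/-- The contextual Shtarkov sum `S_T(F | χ) = Σ_{y ∈ Y^T} sup_{f ∈ F} L(f; y | χ(y))`. -/
noncomputable def shtarkov {X Y : Type*} [Fintype Y] [Inhabited Y]
    (F : Set (Expert X Y)) (T : ℕ) (χ : List Y → X) : ℝ :=
  shtarkovPrefix F T χ [] []

/-- The extensive-form game value with `r` rounds to go, given past contexts `xs`, past
labels `ys`, and accumulated learner loss `acc`:
`sup_{x} inf_{p̂} sup_{y} ⋯ [ acc + Σ ℓ(p̂_s, y_s) − inf_{f ∈ F} Σ_{s=1}^T ℓ(f, y_s) ]`. -/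
noncomputable def valToGo {X Y : Type*} [Fintype Y] [Inhabited Y]
    (F : Set (Expert X Y)) : ℕ → List X → List Y → EReal → EReal
  | 0, xs, ys, acc => acc - ⨅ f : F, cumLoss (f : Expert X Y) xs ys
  | r + 1, xs, ys, acc =>
      ⨆ x : X, ⨅ p : Simplex Y, ⨆ y : Y,
        valToGo F r (xs ++ [x]) (ys ++ [y]) (acc + logloss p y)

/-- The minimax regret
`R_T(F) = sup_{x_1} inf_{p̂_1} sup_{y_1} ⋯ sup_{x_T} inf_{p̂_T} sup_{y_T} R_T(F; p̂, x, y)`. -/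
noncomputable def minimaxRegret {X Y : Type*} [Fintype Y] [Inhabited Y]
    (F : Set (Expert X Y)) (T : ℕ) : EReal :=
  valToGo F T [] [] 0

/-- Nested conditional expectation over a probabilistic tree `π`, for `r` remaining rounds:
`E_{y_1 ∼ π([])} E_{y_2 ∼ π(y_{1:1})} ⋯ [g(y_{1:r})]`. -/
noncomputable def expTree {Y : Type*} [Fintype Y] (π : List Y → Simplex Y)
    (g : List Y → EReal) : ℕ → List Y → EReal
  | 0, pre => g pre
  | r + 1, pre => ∑ y : Y, ((π pre).1 y : EReal) * expTree π g r (pre ++ [y])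

/-- The dual (max-min) value-to-go `W(F, x_{1:t}, y_{1:t})`: the supremum over context trees
`χ` and probabilistic trees `π` of depth `r = T - t` of
`E_{y∼π}[ Σ_{s=t+1}^T ℓ(π_s(y), y_s) − inf_{f ∈ F} Σ_{s=1}^T ℓ(f, y_s) ]`. -/
noncomputable def dualValToGo {X Y : Type*} [Fintype Y] [Inhabited Y]
    (F : Set (Expert X Y)) (r : ℕ) (xs : List X) (ys : List Y) : EReal :=
  ⨆ χ : List Y → X, ⨆ π : List Y → Simplex Y,
    expTree π (fun suf =>
      (∑ s ∈ Finset.range r, logloss (π (suf.take s)) (suf.getD s default)) -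
        ⨅ f : F, cumLoss (f : Expert X Y) (xs ++ treePath χ suf) (ys ++ suf)) r []

/-- The dual (max-min) value `V_T(F)`. -/
noncomputable def dualValue {X Y : Type*} [Fintype Y] [Inhabited Y]
    (F : Set (Expert X Y)) (T : ℕ) : EReal :=
  dualValToGo F T [] []

/-!
Apply the order isomorphism `EReal.exp : EReal ≃o ℝ≥0∞`, which turns sums of losses into
products and `ℓ(p, y)` into `p(y)⁻¹`. Both games then follow the same Shtarkov recursion
`Φ_{r+1}(xs, ys) = sup_x Σ_y Φ_r(xs ++ [x], ys ++ [y])`. In the minimax game the learner's round is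
`inf_p sup_y c_y / p(y) = Σ_y c_y`, attained at `p ∝ c`. In the dual game the adversary's round is
`sup_q ∏_y (c_y / q(y))^{q(y)} = Σ_y c_y` by weighted AM-GM, with equality at `q ∝ c`; there the
suprema over context and probabilistic trees split at the root into root values and subtrees, and
the supremum over subtrees factors through the product over the root label.
-/

open scoped ENNReal

namespace EReal

lemma exp_sum {ι : Type*} (s : Finset ι) (f : ι → EReal) :
    exp (∑ i ∈ s, f i) = ∏ i ∈ s, exp (f i) := by
  classical
  induction s using Finset.induction with
  | empty => simp
  | insert i s hi ih => rw [Finset.sum_insert hi, Finset.prod_insert hi, exp_add, ih]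

lemma exp_iSup {ι : Sort*} (f : ι → EReal) : exp (⨆ i, f i) = ⨆ i, exp (f i) :=
  expOrderIso.map_iSup f

lemma exp_iInf {ι : Sort*} (f : ι → EReal) : exp (⨅ i, f i) = ⨅ i, exp (f i) :=
  expOrderIso.map_iInf f

end EReal

namespace ENNReal

lemma iSup_rpow {ι : Sort*} [Nonempty ι] (f : ι → ℝ≥0∞) {w : ℝ} (hw : 0 ≤ w) :
    (⨆ i, f i) ^ w = ⨆ i, f i ^ w := by
  rcases hw.eq_or_lt with rfl | hw
  · simp
  · exact (orderIsoRpow w hw).map_iSup f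

lemma prod_rpow_eq_rpow_sum {ι : Type*} (s : Finset ι) (a : ℝ≥0∞) {w : ι → ℝ}
    (hw : ∀ i ∈ s, 0 ≤ w i) : ∏ i ∈ s, a ^ w i = a ^ ∑ i ∈ s, w i := by
  classical
  induction s using Finset.induction with
  | empty => simp
  | insert i s hi ih =>
    rw [Finset.prod_insert hi, Finset.sum_insert hi, ih fun j hj => hw j (by simp [hj]),
      rpow_add_of_nonneg _ _ (hw i (by simp)) (Finset.sum_nonneg fun j hj => hw j (by simp [hj]))]

lemma prod_iSup {ι κ : Type*} [Fintype ι] [Nonempty κ] (f : ι → κ → ℝ≥0∞) :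
    ∏ i, ⨆ k, f i k = ⨆ g : ι → κ, ∏ i, f i (g i) := by
  classical
  refine le_antisymm ?_ (iSup_le fun g => Finset.prod_le_prod' fun i _ => le_iSup (f i) (g i))
  suffices ∀ s : Finset ι, ∏ i ∈ s, ⨆ k, f i k ≤ ⨆ g : ι → κ, ∏ i ∈ s, f i (g i) from this _
  intro s
  induction s using Finset.induction with
  | empty => simp
  | insert i s hi ih =>
    rw [Finset.prod_insert hi]
    calc (⨆ k, f i k) * ∏ j ∈ s, ⨆ k, f j k
        ≤ (⨆ k, f i k) * ⨆ g : ι → κ, ∏ j ∈ s, f j (g j) := by gcongr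
      _ = ⨆ k, ⨆ g : ι → κ, f i k * ∏ j ∈ s, f j (g j) := by
        simp only [iSup_mul, mul_iSup]
        exact iSup_comm
      _ ≤ ⨆ g : ι → κ, ∏ j ∈ insert i s, f j (g j) := by
        refine iSup₂_le fun k g => le_iSup_of_le (Function.update g i k) ?_
        rw [Finset.prod_insert hi, Function.update_self]
        gcongr with j hj
        rw [Function.update_of_ne (ne_of_mem_of_not_mem hj hi)]

/-- Weighted AM-GM inequality in `ℝ≥0∞`; a term with zero weight contributes nothing to either
side, even when it is infinite (`∞ ^ 0 = 1`, `0 * ∞ = 0`). -/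
theorem geom_mean_le_arith_mean_weighted {ι : Type*} (s : Finset ι) (w : ι → ℝ) (z : ι → ℝ≥0∞)
    (hw : ∀ i ∈ s, 0 ≤ w i) (hw' : ∑ i ∈ s, w i = 1) :
    ∏ i ∈ s, z i ^ w i ≤ ∑ i ∈ s, ENNReal.ofReal (w i) * z i := by
  by_cases htop : ∃ i ∈ s, w i ≠ 0 ∧ z i = ∞
  · obtain ⟨i, hi, hwi, hzi⟩ := htop
    have hpos : ENNReal.ofReal (w i) ≠ 0 := by
      simpa using lt_of_le_of_ne (hw i hi) (Ne.symm hwi)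
    rw [sum_eq_top.mpr ⟨i, hi, by rw [hzi, mul_top hpos]⟩]
    exact le_top
  push Not at htop
  have hpow : ∀ i ∈ s, z i ^ w i = ENNReal.ofReal ((z i).toReal ^ w i) := by
    intro i hi
    rcases eq_or_ne (w i) 0 with h0 | h0
    · simp [h0]
    · rw [← ofReal_rpow_of_nonneg toReal_nonneg (hw i hi), ofReal_toReal (htop i hi h0)]
  have hmul : ∀ i ∈ s, ENNReal.ofReal (w i) * z i = ENNReal.ofReal (w i * (z i).toReal) := by
    intro i hi
    rcases eq_or_ne (w i) 0 with h0 | h0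
    · simp [h0]
    · rw [ofReal_mul (hw i hi), ofReal_toReal (htop i hi h0)]
  rw [Finset.prod_congr rfl hpow, Finset.sum_congr rfl hmul,
    ← ofReal_prod_of_nonneg fun i _ => Real.rpow_nonneg toReal_nonneg _,
    ← ofReal_sum_of_nonneg fun i hi => mul_nonneg (hw i hi) toReal_nonneg]
  exact ofReal_le_ofReal
    (Real.geom_mean_le_arith_mean_weighted s w _ hw hw' fun _ _ => toReal_nonneg)

end ENNReal

namespace Simplex

variable {Y : Type*} [Fintype Y]

lemma sum_ofReal (p : Simplex Y) : ∑ y, ENNReal.ofReal (p.1 y) = 1 := by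
  rw [← ENNReal.ofReal_sum_of_nonneg fun y _ => p.2.1 y, p.2.2, ENNReal.ofReal_one]

open Classical in
noncomputable def dirac (y₀ : Y) : Simplex Y :=
  ⟨fun y => if y = y₀ then 1 else 0, fun y => by positivity, by simp⟩

instance [Nonempty Y] : Nonempty (Simplex Y) := ⟨dirac (Classical.arbitrary Y)⟩

noncomputable def normalize (c : Y → ℝ≥0∞) (h0 : ∑ y, c y ≠ 0) (htop : ∑ y, c y ≠ ∞) :
    Simplex Y :=
  ⟨fun y => (c y / ∑ y, c y).toReal, fun _ => ENNReal.toReal_nonneg, by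
    have hfin : ∀ y ∈ Finset.univ, c y / ∑ y, c y ≠ ∞ := fun y hy =>
      ENNReal.div_ne_top (ENNReal.sum_ne_top.mp htop y hy) h0
    rw [← ENNReal.toReal_sum hfin]
    simp_rw [div_eq_mul_inv, ← Finset.sum_mul, ENNReal.mul_inv_cancel h0 htop, ENNReal.toReal_one]⟩

lemma inv_ofReal_normalize_mul {c : Y → ℝ≥0∞} (h0 : ∑ y, c y ≠ 0) (htop : ∑ y, c y ≠ ∞) {y : Y}
    (hy : c y ≠ 0) : (ENNReal.ofReal ((normalize c h0 htop).1 y))⁻¹ * c y = ∑ y, c y := by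
  have hy_top : c y ≠ ∞ := ENNReal.sum_ne_top.mp htop y (Finset.mem_univ y)
  rw [normalize, ENNReal.ofReal_toReal (ENNReal.div_ne_top hy_top h0),
    ENNReal.inv_div (Or.inl htop) (Or.inl h0), ENNReal.div_mul_cancel hy hy_top]

lemma sum_le_iSup_inv_mul (p : Simplex Y) (c : Y → ℝ≥0∞) :
    ∑ y, c y ≤ ⨆ y, (ENNReal.ofReal (p.1 y))⁻¹ * c y := by
  set M := ⨆ y, (ENNReal.ofReal (p.1 y))⁻¹ * c y
  rcases eq_or_ne M ∞ with hM | hM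
  · exact hM ▸ le_top
  have hc : ∀ y, c y ≤ M * ENNReal.ofReal (p.1 y) := fun y =>
    (ENNReal.div_le_iff_le_mul (Or.inr hM) (Or.inl ENNReal.ofReal_ne_top)).mp
      ((mul_comm _ _).trans_le (le_iSup (fun y => (ENNReal.ofReal (p.1 y))⁻¹ * c y) y))
  calc ∑ y, c y ≤ ∑ y, M * ENNReal.ofReal (p.1 y) := Finset.sum_le_sum fun y _ => hc y
    _ = M := by rw [← Finset.mul_sum, sum_ofReal, mul_one]

lemma exists_iSup_inv_mul_le_sum [Nonempty Y] (c : Y → ℝ≥0∞) :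
    ∃ p : Simplex Y, ⨆ y, (ENNReal.ofReal (p.1 y))⁻¹ * c y ≤ ∑ y, c y := by
  rcases eq_or_ne (∑ y, c y) 0 with h0 | h0
  · refine ⟨Classical.arbitrary _, iSup_le fun y => ?_⟩
    simp [Finset.sum_eq_zero_iff.mp h0 y (Finset.mem_univ y)]
  rcases eq_or_ne (∑ y, c y) ∞ with htop | htop
  · exact ⟨Classical.arbitrary _, htop ▸ le_top⟩
  refine ⟨normalize c h0 htop, iSup_le fun y => ?_⟩
  rcases eq_or_ne (c y) 0 with hy | hy
  · simp [hy]
  · rw [inv_ofReal_normalize_mul h0 htop hy]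

lemma iInf_mul_iSup_inv_mul [Nonempty Y] (A : ℝ≥0∞) (c : Y → ℝ≥0∞) :
    ⨅ p : Simplex Y, A * ⨆ y, (ENNReal.ofReal (p.1 y))⁻¹ * c y = A * ∑ y, c y := by
  obtain ⟨p, hp⟩ := exists_iSup_inv_mul_le_sum c
  exact le_antisymm (iInf_le_of_le p (by gcongr))
    (le_iInf fun p => by gcongr; exact sum_le_iSup_inv_mul p c)

lemma prod_inv_mul_rpow_le_sum (q : Simplex Y) (c : Y → ℝ≥0∞) :
    ∏ y, ((ENNReal.ofReal (q.1 y))⁻¹ * c y) ^ q.1 y ≤ ∑ y, c y := by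
  refine (ENNReal.geom_mean_le_arith_mean_weighted _ _ _ (fun y _ => q.2.1 y) q.2.2).trans
    (Finset.sum_le_sum fun y _ => ?_)
  rcases eq_or_ne (ENNReal.ofReal (q.1 y)) 0 with h0 | h0
  · simp [h0]
  · rw [← mul_assoc, ENNReal.mul_inv_cancel h0 ENNReal.ofReal_ne_top, one_mul]

lemma exists_sum_le_prod_inv_mul_rpow [Nonempty Y] (c : Y → ℝ≥0∞) :
    ∃ q : Simplex Y, ∑ y, c y ≤ ∏ y, ((ENNReal.ofReal (q.1 y))⁻¹ * c y) ^ q.1 y := by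
  rcases eq_or_ne (∑ y, c y) 0 with h0 | h0
  · exact ⟨Classical.arbitrary _, by rw [h0]; exact zero_le⟩
  rcases eq_or_ne (∑ y, c y) ∞ with htop | htop
  · obtain ⟨y₀, -, hy₀⟩ := ENNReal.sum_eq_top.mp htop
    refine ⟨dirac y₀, le_of_eq ?_⟩
    rw [htop, Finset.prod_eq_single y₀ (fun y _ hy => by simp [dirac, hy]) (by simp)]
    simp [dirac, hy₀]
  refine ⟨normalize c h0 htop, le_of_eq ?_⟩
  have hfactor : ∀ y, ((ENNReal.ofReal ((normalize c h0 htop).1 y))⁻¹ * c y) ^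
      (normalize c h0 htop).1 y = (∑ y, c y) ^ (normalize c h0 htop).1 y := by
    intro y
    rcases eq_or_ne (c y) 0 with hy | hy
    · simp [normalize, hy]
    · rw [inv_ofReal_normalize_mul h0 htop hy]
  rw [Finset.prod_congr rfl fun y _ => hfactor y,
    ENNReal.prod_rpow_eq_rpow_sum _ _ fun y _ => (normalize c h0 htop).2.1 y,
    (normalize c h0 htop).2.2, ENNReal.rpow_one]

lemma iSup_prod_inv_mul_rpow [Nonempty Y] (c : Y → ℝ≥0∞) :
    ⨆ q : Simplex Y, ∏ y, ((ENNReal.ofReal (q.1 y))⁻¹ * c y) ^ q.1 y = ∑ y, c y := by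
  obtain ⟨q, hq⟩ := exists_sum_le_prod_inv_mul_rpow c
  exact le_antisymm (iSup_le fun q => prod_inv_mul_rpow_le_sum q c) (le_iSup_of_le q hq)

end Simplex

lemma exp_logloss {Y : Type*} [Fintype Y] (p : Simplex Y) (y : Y) :
    EReal.exp (logloss p y) = (ENNReal.ofReal (p.1 y))⁻¹ := by
  unfold logloss negLog
  split_ifs with h
  · simp [ENNReal.ofReal_eq_zero.mpr h]
  · rw [EReal.exp_coe, Real.exp_neg, Real.exp_log (not_le.mp h),
      ENNReal.ofReal_inv_of_pos (not_le.mp h)]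

section Game

variable {X Y : Type*} [Fintype Y] [Inhabited Y]

/-- The common value of `EReal.exp` of both games. As `exp (-⨅ f, cumLoss f xs ys)` is the
maximum likelihood of `ys` given `xs`, at the root this is the supremum over context trees of the
contextual Shtarkov sum. -/
noncomputable def shtarkovValToGo (F : Set (Expert X Y)) : ℕ → List X → List Y → ℝ≥0∞
  | 0, xs, ys => EReal.exp (-⨅ f : F, cumLoss (f : Expert X Y) xs ys)
  | r + 1, xs, ys => ⨆ x : X, ∑ y : Y, shtarkovValToGo F r (xs ++ [x]) (ys ++ [y])

lemma exp_valToGo (F : Set (Expert X Y)) (r : ℕ) (xs : List X) (ys : List Y) (acc : EReal) :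
    EReal.exp (valToGo F r xs ys acc) = EReal.exp acc * shtarkovValToGo F r xs ys := by
  induction r generalizing xs ys acc with
  | zero => rw [valToGo, shtarkovValToGo, sub_eq_add_neg, EReal.exp_add]
  | succ r ih =>
    simp only [valToGo, shtarkovValToGo, EReal.exp_iSup, EReal.exp_iInf, ih, EReal.exp_add,
      exp_logloss, mul_assoc, ← ENNReal.mul_iSup, Simplex.iInf_mul_iSup_inv_mul]

end Game

section Dual

lemma expTree_append {Y : Type*} [Fintype Y] (π : List Y → Simplex Y) (g : List Y → EReal)
    (pre : List Y) (r : ℕ) (l : List Y) :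
    expTree π g r (pre ++ l) = expTree (fun t => π (pre ++ t)) (fun t => g (pre ++ t)) r l := by
  induction r generalizing l with
  | zero => rfl
  | succ r ih => simp only [expTree, List.append_assoc, ih]

lemma exp_expTree_succ {Y : Type*} [Fintype Y] (π : List Y → Simplex Y) (g : List Y → EReal)
    (r : ℕ) (pre : List Y) :
    EReal.exp (expTree π g (r + 1) pre)
      = ∏ y, EReal.exp (expTree π g r (pre ++ [y])) ^ (π pre).1 y := by
  simp only [expTree, EReal.exp_sum, mul_comm ((π pre).1 _ : EReal), EReal.exp_mul]

lemma exp_expTree_const_add {Y : Type*} [Fintype Y] (π : List Y → Simplex Y) (a : EReal)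
    (g : List Y → EReal) (r : ℕ) (pre : List Y) :
    EReal.exp (expTree π (fun suf => a + g suf) r pre)
      = EReal.exp a * EReal.exp (expTree π g r pre) := by
  induction r generalizing pre with
  | zero => exact EReal.exp_add _ _
  | succ r ih =>
    simp only [exp_expTree_succ, ih, ENNReal.mul_rpow_of_nonneg _ _ ((π pre).2.1 _),
      Finset.prod_mul_distrib,
      ENNReal.prod_rpow_eq_rpow_sum _ _ fun y _ => (π pre).2.1 y, (π pre).2.2, ENNReal.rpow_one]

lemma treePath_cons {X Y : Type*} (χ : List Y → X) (y : Y) (suf : List Y) :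
    treePath χ (y :: suf) = χ [] :: treePath (fun l => χ (y :: l)) suf := by
  simp only [treePath, List.length_cons, List.range_succ_eq_map, List.map_cons, List.map_map]
  rfl

lemma iSup_cons_trees {Y α β γ : Type*} [CompleteLattice γ]
    (K : α → β → (Y → List Y → α) → (Y → List Y → β) → γ) :
    ⨆ (χ : List Y → α) (π : List Y → β),
        K (χ []) (π []) (fun y l => χ (y :: l)) (fun y l => π (y :: l))
      = ⨆ (a : α) (b : β) (gχ : Y → List Y → α) (gπ : Y → List Y → β), K a b gχ gπ :=
  le_antisymm (iSup₂_le fun χ π => le_iSup₂_of_le (χ []) (π []) (le_iSup₂_of_le _ _ le_rfl))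
    (iSup₂_le fun a b => iSup₂_le fun gχ gπ =>
      le_iSup₂_of_le (fun l => List.casesOn l a gχ) (fun l => List.casesOn l b gπ) le_rfl)

variable {X Y : Type*} [Fintype Y] [Inhabited Y]

noncomputable def dualPayoff (F : Set (Expert X Y)) (r : ℕ) (xs : List X) (ys : List Y)
    (χ : List Y → X) (π : List Y → Simplex Y) : EReal :=
  expTree π (fun suf =>
    (∑ s ∈ Finset.range r, logloss (π (suf.take s)) (suf.getD s default)) -
      ⨅ f : F, cumLoss (f : Expert X Y) (xs ++ treePath χ suf) (ys ++ suf)) r []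

lemma dualValToGo_eq_iSup_dualPayoff (F : Set (Expert X Y)) (r : ℕ) (xs : List X)
    (ys : List Y) : dualValToGo F r xs ys = ⨆ χ, ⨆ π, dualPayoff F r xs ys χ π :=
  rfl

lemma exp_dualPayoff_succ (F : Set (Expert X Y)) (r : ℕ) (xs : List X) (ys : List Y)
    (χ : List Y → X) (π : List Y → Simplex Y) :
    EReal.exp (dualPayoff F (r + 1) xs ys χ π)
      = ∏ y, ((ENNReal.ofReal ((π []).1 y))⁻¹ * EReal.exp (dualPayoff F r (xs ++ [χ []])
          (ys ++ [y]) (fun l => χ (y :: l)) (fun l => π (y :: l)))) ^ (π []).1 y := by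
  rw [dualPayoff, exp_expTree_succ]
  refine Finset.prod_congr rfl fun y _ => ?_
  rw [show [] ++ [y] = [y] ++ [] from rfl, expTree_append, ← exp_logloss, dualPayoff,
    ← exp_expTree_const_add]
  congr 3 with suf
  simp only [List.singleton_append, Finset.sum_range_succ', List.take_succ_cons,
    List.getD_cons_succ, List.take_zero, List.getD_cons_zero, treePath_cons, List.append_assoc]
  rw [add_comm _ (logloss (π []) y), sub_eq_add_neg, sub_eq_add_neg, add_assoc]

lemma exp_dualValToGo [Nonempty X] (F : Set (Expert X Y)) (r : ℕ) (xs : List X) (ys : List Y) :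
    EReal.exp (dualValToGo F r xs ys) = shtarkovValToGo F r xs ys := by
  induction r generalizing xs ys with
  | zero => simp [dualValToGo, expTree, treePath, shtarkovValToGo]
  | succ r ih =>
    calc EReal.exp (dualValToGo F (r + 1) xs ys)
        = ⨆ (χ : List Y → X) (π : List Y → Simplex Y), ∏ y, ((ENNReal.ofReal ((π []).1 y))⁻¹ *
            EReal.exp (dualPayoff F r (xs ++ [χ []]) (ys ++ [y]) (fun l => χ (y :: l))
              (fun l => π (y :: l)))) ^ (π []).1 y := by
          simp only [dualValToGo_eq_iSup_dualPayoff, EReal.exp_iSup, exp_dualPayoff_succ]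
      _ = ⨆ (x : X) (q : Simplex Y) (gχ : Y → List Y → X) (gπ : Y → List Y → Simplex Y),
            ∏ y, ((ENNReal.ofReal (q.1 y))⁻¹ *
              EReal.exp (dualPayoff F r (xs ++ [x]) (ys ++ [y]) (gχ y) (gπ y))) ^ q.1 y :=
          iSup_cons_trees fun x q gχ gπ => ∏ y, ((ENNReal.ofReal (q.1 y))⁻¹ *
            EReal.exp (dualPayoff F r (xs ++ [x]) (ys ++ [y]) (gχ y) (gπ y))) ^ q.1 y
      _ = ⨆ (x : X) (q : Simplex Y), ∏ y, ((ENNReal.ofReal (q.1 y))⁻¹ *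
            shtarkovValToGo F r (xs ++ [x]) (ys ++ [y])) ^ q.1 y := by
          refine iSup_congr fun x => iSup_congr fun q => ?_
          simp only [← ih, dualValToGo_eq_iSup_dualPayoff, EReal.exp_iSup, ENNReal.mul_iSup,
            ENNReal.iSup_rpow _ (q.2.1 _), ENNReal.prod_iSup]
      _ = shtarkovValToGo F (r + 1) xs ys := by
          simp only [Simplex.iSup_prod_inv_mul_rpow, shtarkovValToGo]

end Dual

theorem minimaxRegret_eq_dualValue_general
    {X Y : Type*} [Fintype Y] [Inhabited Y] [Nonempty X]
    (F : Set (Expert X Y)) (T : ℕ) :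
    minimaxRegret F T = dualValue F T := by
  refine EReal.exp_strictMono.injective ?_
  rw [minimaxRegret, dualValue, exp_valToGo, exp_dualValToGo, EReal.exp_zero, one_mul]

/-- If for every `x_{1:T} ∈ X^T` and `y_{1:T} ∈ Y^T` the best expert's
cumulative log loss is finite, i.e. `inf_{f ∈ F} Σ_{t=1}^T ℓ(f(x_{1:t}, y_{1:t-1}), y_t) < ∞`,
then the minimax regret equals the dual value: `R_T(F) = V_T(F)`. -/
theorem minimaxRegret_eq_dualValue
    {X Y : Type*} [Fintype Y] [Inhabited Y] [Nonempty X]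
    (F : Set (Expert X Y)) (hF : F.Nonempty) (T : ℕ) (hT : 1 ≤ T)
    (h : ∀ (xs : List X) (ys : List Y), xs.length = T → ys.length = T →
      (⨅ f : F, cumLoss (f : Expert X Y) xs ys) < ⊤) :
    minimaxRegret F T = dualValue F T :=
  minimaxRegret_eq_dualValue_general F T
end

section
/- For every nonempty class F of sequential experts and every horizon T ≥ 1, the dual value equals the worst-case log contextual Shtarkov sum: V_T(F) = sup_x log S_T(F | x), the supremum being over all context trees x of depth T (equality in the extended reals). -/
open scoped BigOperators

/-!
For a context tree `χ` and a probabilistic tree `π`, the payoff averaged over `π` is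
`∑_y P(y) (log M(y) - log P(y))`, where `P(y)` is the probability `π` gives to the path `y` and
`M(y) = sup_{f ∈ F} L(f; y | χ(y))`. By `log t ≤ t - 1` this is at most `log ∑_y M(y)`, with
equality when `P = M / ∑ M`. This `P` is realised by the probabilistic tree whose conditionals are
ratios of partial Shtarkov sums (the normalized maximum likelihood tree), so the supremum over `π`
is exactly `log S_T(F | χ)`.
-/

section Logarithms

lemma elog_eq_log_ofReal (x : ℝ) : elog x = ENNReal.log (ENNReal.ofReal x) := by
  rw [ENNReal.log_ofReal]; rfl

lemma elog_of_pos {x : ℝ} (h : 0 < x) : elog x = Real.log x := if_neg h.not_ge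

lemma elog_ne_top (x : ℝ) : elog x ≠ ⊤ := by
  unfold elog; split_ifs <;> simp

lemma negLog_eq_neg_elog (x : ℝ) : negLog x = -elog x := by
  unfold negLog elog; split_ifs <;> simp

lemma negLog_of_pos {x : ℝ} (h : 0 < x) : negLog x = ((-Real.log x : ℝ) : EReal) :=
  if_neg h.not_ge

lemma negLog_of_nonpos {x : ℝ} (h : x ≤ 0) : negLog x = ⊤ := if_pos h

lemma negLog_mul {a : ℝ} (ha : 0 ≤ a) (b : ℝ) : negLog (a * b) = negLog a + negLog b := by
  rw [negLog_eq_neg_elog, negLog_eq_neg_elog, negLog_eq_neg_elog, elog_eq_log_ofReal,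
    ENNReal.ofReal_mul ha, ENNReal.log_mul_add, ← elog_eq_log_ofReal, ← elog_eq_log_ofReal,
    EReal.neg_add (.inr (elog_ne_top b)) (.inl (elog_ne_top a)), sub_eq_add_neg]

lemma negLog_prod {ι : Type*} (s : Finset ι) {f : ι → ℝ} (hf : ∀ i ∈ s, 0 ≤ f i) :
    negLog (∏ i ∈ s, f i) = ∑ i ∈ s, negLog (f i) := by
  induction s using Finset.cons_induction with
  | empty => simp [negLog_of_pos one_pos]
  | cons a s ha ih =>
    rw [Finset.prod_cons, Finset.sum_cons, negLog_mul (hf a (Finset.mem_cons_self a s)),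
      ih fun i hi => hf i (Finset.mem_cons_of_mem hi)]

lemma continuous_negLog : Continuous negLog := by
  have h : negLog = fun x => -ENNReal.log (ENNReal.ofReal x) := by
    funext x; rw [negLog_eq_neg_elog, elog_eq_log_ofReal]
  rw [h]
  exact continuous_neg.comp (ENNReal.continuous_log.comp ENNReal.continuous_ofReal)

lemma antitone_negLog : Antitone negLog := fun a b hab => by
  rw [negLog_eq_neg_elog, negLog_eq_neg_elog, elog_eq_log_ofReal, elog_eq_log_ofReal,
    EReal.neg_le_neg_iff]
  exact ENNReal.log_monotone (ENNReal.ofReal_le_ofReal hab)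

lemma negLog_ciSup {ι : Sort*} [Nonempty ι] {g : ι → ℝ} (hg : BddAbove (Set.range g)) :
    negLog (⨆ i, g i) = ⨅ i, negLog (g i) :=
  antitone_negLog.map_ciSup_of_continuousAt continuous_negLog.continuousAt hg

end Logarithms

lemma EReal.coe_finset_sum {ι : Type*} (s : Finset ι) (f : ι → ℝ) :
    ((∑ i ∈ s, f i : ℝ) : EReal) = ∑ i ∈ s, (f i : EReal) :=
  map_sum (⟨⟨Real.toEReal, EReal.coe_zero⟩, EReal.coe_add⟩ : ℝ →+ EReal) f s

lemma EReal.coe_mul_finset_sum {ι : Type*} {c : ℝ} (hc : 0 ≤ c) (s : Finset ι)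
    (f : ι → EReal) : (c : EReal) * ∑ i ∈ s, f i = ∑ i ∈ s, (c : EReal) * f i := by
  induction s using Finset.cons_induction with
  | empty => simp
  | cons a s ha ih =>
    rw [Finset.sum_cons, Finset.sum_cons, EReal.left_distrib_of_nonneg_of_ne_top
      (EReal.coe_nonneg.2 hc) (EReal.coe_ne_top c), ih]

section Gibbs

-- `log t ≤ t - 1` at `t = m / (p S)`, multiplied by `p`.
lemma coe_mul_negLog_sub_negLog_le {p m S : ℝ} (hp : 0 ≤ p) (hm : 0 ≤ m) (hS : 0 < S) :
    (p : EReal) * (negLog p - negLog m) ≤ ((m / S - p + p * Real.log S : ℝ) : EReal) := by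
  rcases hp.eq_or_lt with rfl | hp
  · rw [EReal.coe_zero, zero_mul, EReal.coe_nonneg]
    simpa using div_nonneg hm hS.le
  rcases hm.eq_or_lt with rfl | hm
  · rw [negLog_of_nonpos le_rfl, EReal.sub_top, EReal.coe_mul_bot_of_pos hp]
    exact bot_le
  rw [negLog_of_pos hp, negLog_of_pos hm, ← EReal.coe_sub, ← EReal.coe_mul,
    EReal.coe_le_coe_iff]
  have hlog := Real.log_le_sub_one_of_pos (div_pos hm (mul_pos hp hS))
  rw [Real.log_div hm.ne' (mul_pos hp hS).ne', Real.log_mul hp.ne' hS.ne'] at hlog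
  have hscale : p * (m / (p * S)) = m / S := by field_simp
  nlinarith [mul_le_mul_of_nonneg_left hlog hp.le]

lemma coe_div_mul_negLog_sub_negLog {m S : ℝ} (hm : 0 ≤ m) (hS : 0 < S) :
    ((m / S : ℝ) : EReal) * (negLog (m / S) - negLog m)
      = ((m / S * Real.log S : ℝ) : EReal) := by
  rcases hm.eq_or_lt with rfl | hm
  · simp
  rw [negLog_of_pos (div_pos hm hS), negLog_of_pos hm, ← EReal.coe_sub, ← EReal.coe_mul,
    Real.log_div hm.ne' hS.ne']
  ring_nf

variable {ι : Type*} [Fintype ι] {M : ι → ℝ}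

theorem sum_mul_negLog_sub_negLog_le {P : ι → ℝ} (hP : ∀ i, 0 ≤ P i) (hP1 : ∑ i, P i = 1)
    (hM : ∀ i, 0 ≤ M i) (hS : 0 < ∑ i, M i) :
    ∑ i, (P i : EReal) * (negLog (P i) - negLog (M i)) ≤ elog (∑ i, M i) := by
  set S := ∑ i, M i
  calc ∑ i, (P i : EReal) * (negLog (P i) - negLog (M i))
      ≤ ∑ i, ((M i / S - P i + P i * Real.log S : ℝ) : EReal) :=
        Finset.sum_le_sum fun i _ => coe_mul_negLog_sub_negLog_le (hP i) (hM i) hS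
    _ = elog S := by
        rw [← EReal.coe_finset_sum, elog_of_pos hS, Finset.sum_add_distrib,
          Finset.sum_sub_distrib, ← Finset.sum_div, ← Finset.sum_mul, hP1, div_self hS.ne']
        ring_nf

theorem sum_div_mul_negLog_sub_negLog (hM : ∀ i, 0 ≤ M i) (hS : 0 < ∑ i, M i) :
    ∑ i, ((M i / ∑ j, M j : ℝ) : EReal) * (negLog (M i / ∑ j, M j) - negLog (M i))
      = elog (∑ i, M i) := by
  simp only [coe_div_mul_negLog_sub_negLog (hM _) hS]
  rw [← EReal.coe_finset_sum, ← Finset.sum_mul, ← Finset.sum_div, div_self hS.ne', one_mul,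
    elog_of_pos hS]

end Gibbs

lemma Simplex.apply_le_one {Y : Type*} [Fintype Y] (p : Simplex Y) (y : Y) : p.1 y ≤ 1 :=
  (Finset.single_le_sum (fun z _ => p.2.1 z) (Finset.mem_univ y)).trans_eq p.2.2

lemma sum_pi_fin_succ {Y M : Type*} [Fintype Y] [AddCommMonoid M] (r : ℕ)
    (φ : (Fin (r + 1) → Y) → M) :
    ∑ w : Fin (r + 1) → Y, φ w = ∑ y : Y, ∑ w : Fin r → Y, φ (Fin.cons y w) := by
  rw [← Fintype.sum_prod_type' (f := fun y w => φ (Fin.cons y w))]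
  exact (Fintype.sum_equiv (Fin.consEquiv fun _ => Y) _ _ fun _ => rfl).symm

lemma List.ofFn_fin_cons {Y : Type*} {r : ℕ} (y : Y) (w : Fin r → Y) :
    List.ofFn (Fin.cons y w : Fin (r + 1) → Y) = y :: List.ofFn w := by
  simp [List.ofFn_succ]

section Paths

variable {Y : Type*} [Fintype Y] [Inhabited Y]

noncomputable def pathProb (π : List Y → Simplex Y) (pre ys : List Y) : ℝ :=
  ∏ s ∈ Finset.range ys.length, (π (pre ++ ys.take s)).1 (ys.getD s default)

lemma pathProb_nil (π : List Y → Simplex Y) (pre : List Y) : pathProb π pre [] = 1 := by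
  simp [pathProb]

lemma pathProb_cons (π : List Y → Simplex Y) (pre : List Y) (y : Y) (ys : List Y) :
    pathProb π pre (y :: ys) = (π pre).1 y * pathProb π (pre ++ [y]) ys := by
  unfold pathProb
  rw [List.length_cons, Finset.prod_range_succ']
  simp [mul_comm]

lemma pathProb_nonneg (π : List Y → Simplex Y) (pre ys : List Y) : 0 ≤ pathProb π pre ys :=
  Finset.prod_nonneg fun _ _ => (π _).2.1 _

lemma sum_pathProb (π : List Y → Simplex Y) (r : ℕ) (pre : List Y) :
    ∑ w : Fin r → Y, pathProb π pre (List.ofFn w) = 1 := by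
  induction r generalizing pre with
  | zero => simp [pathProb]
  | succ r ih =>
    simp only [sum_pi_fin_succ, List.ofFn_fin_cons, pathProb_cons, ← Finset.mul_sum, ih,
      mul_one, (π pre).2.2]

lemma negLog_pathProb (π : List Y → Simplex Y) (pre ys : List Y) :
    negLog (pathProb π pre ys)
      = ∑ s ∈ Finset.range ys.length, logloss (π (pre ++ ys.take s)) (ys.getD s default) :=
  negLog_prod _ fun _ _ => (π _).2.1 _

lemma expTree_eq_sum (π : List Y → Simplex Y) (g : List Y → EReal) (r : ℕ) (pre : List Y) :
    expTree π g r pre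
      = ∑ w : Fin r → Y, (pathProb π pre (List.ofFn w) : EReal) * g (pre ++ List.ofFn w) := by
  induction r generalizing pre with
  | zero => simp [expTree, pathProb_nil]
  | succ r ih =>
    rw [expTree, sum_pi_fin_succ]
    refine Finset.sum_congr rfl fun y _ => ?_
    rw [ih, EReal.coe_mul_finset_sum ((π pre).2.1 y)]
    refine Finset.sum_congr rfl fun w _ => ?_
    rw [List.ofFn_fin_cons, pathProb_cons, EReal.coe_mul, mul_assoc]
    simp

end Paths

lemma treePath_take_succ {X Y : Type*} (χ : List Y → X) {ys : List Y} {t : ℕ}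
    (ht : t < ys.length) :
    (treePath χ ys).take (t + 1) = treePath χ (ys.take t) ++ [χ (ys.take t)] := by
  unfold treePath
  rw [← List.map_take, List.take_range, min_eq_left ht, List.range_succ, List.map_append,
    List.length_take, min_eq_left ht.le, List.map_singleton]
  congr 1
  refine List.map_congr_left fun s hs => ?_
  rw [List.take_take, min_eq_left (List.mem_range.1 hs).le]

section Experts

variable {X Y : Type*} [Fintype Y] [Inhabited Y]

def expertTree (f : Expert X Y) (χ : List Y → X) (pre : List Y) : Simplex Y :=
  f (treePath χ pre ++ [χ pre]) pre

lemma likelihood_treePath (f : Expert X Y) (χ : List Y → X) (ys : List Y) :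
    likelihood f (treePath χ ys) ys = pathProb (expertTree f χ) [] ys := by
  refine Finset.prod_congr rfl fun t ht => ?_
  rw [treePath_take_succ χ (Finset.mem_range.1 ht), List.nil_append]
  rfl

lemma sum_likelihood_treePath (f : Expert X Y) (χ : List Y → X) (T : ℕ) :
    ∑ w : Fin T → Y, likelihood f (treePath χ (List.ofFn w)) (List.ofFn w) = 1 := by
  simp only [likelihood_treePath, sum_pathProb]

lemma likelihood_nonneg (f : Expert X Y) (xs : List X) (ys : List Y) :
    0 ≤ likelihood f xs ys :=
  Finset.prod_nonneg fun _ _ => (f _ _).2.1 _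

lemma likelihood_le_one (f : Expert X Y) (xs : List X) (ys : List Y) :
    likelihood f xs ys ≤ 1 :=
  Finset.prod_le_one (fun _ _ => (f _ _).2.1 _) fun _ _ => Simplex.apply_le_one _ _

lemma cumLoss_eq_negLog_likelihood (f : Expert X Y) (xs : List X) (ys : List Y) :
    cumLoss f xs ys = negLog (likelihood f xs ys) :=
  (negLog_prod _ fun _ _ => (f _ _).2.1 _).symm

variable (F : Set (Expert X Y))

noncomputable def maxLik (χ : List Y → X) (ys : List Y) : ℝ :=
  ⨆ f : F, likelihood (f : Expert X Y) (treePath χ ys) ys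

lemma bddAbove_range_likelihood (χ : List Y → X) (ys : List Y) :
    BddAbove (Set.range fun f : F => likelihood (f : Expert X Y) (treePath χ ys) ys) :=
  ⟨1, Set.forall_mem_range.2 fun _ => likelihood_le_one _ _ _⟩

lemma likelihood_le_maxLik {f : Expert X Y} (hf : f ∈ F) (χ : List Y → X) (ys : List Y) :
    likelihood f (treePath χ ys) ys ≤ maxLik F χ ys :=
  le_ciSup (bddAbove_range_likelihood F χ ys) ⟨f, hf⟩

variable {F}

lemma maxLik_nonneg (hF : F.Nonempty) (χ : List Y → X) (ys : List Y) : 0 ≤ maxLik F χ ys :=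
  (likelihood_nonneg _ _ _).trans (likelihood_le_maxLik F hF.some_mem χ ys)

lemma iInf_cumLoss_eq_negLog_maxLik (hF : F.Nonempty) (χ : List Y → X) (ys : List Y) :
    ⨅ f : F, cumLoss (f : Expert X Y) (treePath χ ys) ys = negLog (maxLik F χ ys) := by
  have : Nonempty F := hF.to_subtype
  simp only [cumLoss_eq_negLog_likelihood]
  exact (negLog_ciSup (bddAbove_range_likelihood F χ ys)).symm

end Experts

section NormalizedTree

variable {Y : Type*} [Fintype Y] (M : List Y → ℝ)

noncomputable def pathSum (r : ℕ) (pre : List Y) : ℝ :=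
  ∑ w : Fin r → Y, M (pre ++ List.ofFn w)

lemma pathSum_zero (pre : List Y) : pathSum M 0 pre = M pre := by
  simp [pathSum]

lemma pathSum_succ (r : ℕ) (pre : List Y) :
    pathSum M (r + 1) pre = ∑ y : Y, pathSum M r (pre ++ [y]) := by
  simp [pathSum, sum_pi_fin_succ]

lemma pathSum_nil (r : ℕ) : pathSum M r [] = ∑ w : Fin r → Y, M (List.ofFn w) := by
  simp [pathSum]

variable {M}

lemma pathSum_nonneg (hM : ∀ ys, 0 ≤ M ys) (r : ℕ) (pre : List Y) : 0 ≤ pathSum M r pre :=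
  Finset.sum_nonneg fun _ _ => hM _

lemma pathSum_append_singleton_le (hM : ∀ ys, 0 ≤ M ys) (r : ℕ) (pre : List Y) (y : Y) :
    pathSum M r (pre ++ [y]) ≤ pathSum M (r + 1) pre := by
  rw [pathSum_succ]
  exact Finset.single_le_sum (fun z _ => pathSum_nonneg hM r (pre ++ [z])) (Finset.mem_univ y)

variable [Inhabited Y] (hM : ∀ ys, 0 ≤ M ys)

/-- Where the mass below `pre` vanishes any distribution would do; the uniform one is used. -/
noncomputable def condDist (r : ℕ) (pre : List Y) : Simplex Y :=
  if h : 0 < pathSum M (r + 1) pre then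
    ⟨fun y => pathSum M r (pre ++ [y]) / pathSum M (r + 1) pre,
      fun _ => div_nonneg (pathSum_nonneg hM _ _) h.le,
      by rw [← Finset.sum_div, ← pathSum_succ, div_self h.ne']⟩
  else
    ⟨fun _ => (Fintype.card Y : ℝ)⁻¹, fun _ => by positivity, by simp⟩

lemma condDist_mul_pathSum (r : ℕ) (pre : List Y) (y : Y) :
    (condDist hM r pre).1 y * pathSum M (r + 1) pre = pathSum M r (pre ++ [y]) := by
  unfold condDist
  split_ifs with h
  · exact div_mul_cancel₀ _ h.ne'
  · have h0 : pathSum M (r + 1) pre = 0 := le_antisymm (not_lt.1 h) (pathSum_nonneg hM _ _)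
    rw [h0, mul_zero]
    exact (le_antisymm (h0 ▸ pathSum_append_singleton_le hM r pre y)
      (pathSum_nonneg hM _ _)).symm

/-- For `M = maxLik F χ` this is the normalized maximum likelihood tree. -/
noncomputable def condTree (T : ℕ) (pre : List Y) : Simplex Y :=
  condDist hM (T - (pre.length + 1)) pre

lemma pathProb_condTree_mul_pathSum {T : ℕ} (pre ys : List Y)
    (hlen : pre.length + ys.length = T) :
    pathProb (condTree hM T) pre ys * pathSum M ys.length pre = M (pre ++ ys) := by
  induction ys generalizing pre with
  | nil => simp [pathProb_nil, pathSum_zero]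
  | cons y ys ih =>
    rw [List.length_cons] at hlen
    have hdepth : T - (pre.length + 1) = ys.length := by omega
    calc pathProb (condTree hM T) pre (y :: ys) * pathSum M (y :: ys).length pre
        = pathProb (condTree hM T) (pre ++ [y]) ys
            * ((condDist hM ys.length pre).1 y * pathSum M (ys.length + 1) pre) := by
          rw [pathProb_cons, condTree, hdepth, List.length_cons]; ring
      _ = M (pre ++ y :: ys) := by
          rw [condDist_mul_pathSum, ih _ (by simp only [List.length_append, List.length_singleton]; omega)]
          simp

lemma pathProb_condTree {T : ℕ} (hS : 0 < ∑ v : Fin T → Y, M (List.ofFn v)) (w : Fin T → Y) :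
    pathProb (condTree hM T) [] (List.ofFn w)
      = M (List.ofFn w) / ∑ v : Fin T → Y, M (List.ofFn v) := by
  rw [eq_div_iff hS.ne', ← pathSum_nil]
  simpa using pathProb_condTree_mul_pathSum hM [] (List.ofFn w) (by simp)

end NormalizedTree

section DualValue

variable {X Y : Type*} [Fintype Y] [Inhabited Y] {F : Set (Expert X Y)}

lemma shtarkov_eq_sum_maxLik (χ : List Y → X) (T : ℕ) :
    shtarkov F T χ = ∑ w : Fin T → Y, maxLik F χ (List.ofFn w) := by
  simp [shtarkov, shtarkovPrefix, maxLik]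

lemma one_le_sum_maxLik (hF : F.Nonempty) (χ : List Y → X) (T : ℕ) :
    1 ≤ ∑ w : Fin T → Y, maxLik F χ (List.ofFn w) := by
  rw [← sum_likelihood_treePath hF.some χ T]
  exact Finset.sum_le_sum fun w _ => likelihood_le_maxLik F hF.some_mem χ _

lemma dualValue_eq_iSup_sum (hF : F.Nonempty) (T : ℕ) :
    dualValue F T = ⨆ χ : List Y → X, ⨆ π : List Y → Simplex Y,
      ∑ w : Fin T → Y, (pathProb π [] (List.ofFn w) : EReal) *
        (negLog (pathProb π [] (List.ofFn w)) - negLog (maxLik F χ (List.ofFn w))) := by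
  refine iSup_congr fun χ => iSup_congr fun π => ?_
  rw [expTree_eq_sum]
  refine Finset.sum_congr rfl fun w _ => ?_
  rw [negLog_pathProb, ← iInf_cumLoss_eq_negLog_maxLik hF]
  simp

end DualValue

theorem dualValue_eq_sup_log_shtarkov_general
    {X Y : Type*} [Fintype Y] [Inhabited Y]
    (F : Set (Expert X Y)) (hF : F.Nonempty) (T : ℕ) :
    dualValue F T = ⨆ χ : List Y → X, elog (shtarkov F T χ) := by
  rw [dualValue_eq_iSup_sum hF]
  refine le_antisymm (iSup_le fun χ => iSup_le fun π => le_iSup_of_le χ ?_)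
    (iSup_le fun χ => ?_)
  all_goals
    have hM := maxLik_nonneg hF χ
    have hS := one_pos.trans_le (one_le_sum_maxLik hF χ T)
    rw [shtarkov_eq_sum_maxLik]
  · exact sum_mul_negLog_sub_negLog_le (fun _ => pathProb_nonneg _ _ _) (sum_pathProb π T [])
      (fun _ => hM _) hS
  · rw [← sum_div_mul_negLog_sub_negLog (fun _ => hM _) hS]
    refine le_iSup_of_le χ (le_iSup_of_le (condTree hM T) (le_of_eq ?_))
    simp only [pathProb_condTree hM hS]

/-- For every nonempty class `F` of sequential experts and horizon `T ≥ 1`,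
the dual value equals the worst-case log contextual Shtarkov sum:
`V_T(F) = sup_χ log S_T(F | χ)` (equality in the extended reals). -/
theorem dualValue_eq_sup_log_shtarkov
    {X Y : Type*} [Fintype Y] [Inhabited Y] [Nonempty X]
    (F : Set (Expert X Y)) (hF : F.Nonempty) (T : ℕ) (hT : 1 ≤ T) :
    dualValue F T = ⨆ χ : List Y → X, elog (shtarkov F T χ) :=
  dualValue_eq_sup_log_shtarkov_general F hF T
end
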